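/- Let m ≥ 1, α ≥ 1, and let X = T(A_0, A_1, …, A_{α−1}) be the α×α block upper-triangular Toeplitz matrix with blocks A_j ∈ ℂ^{m×m}. Then E_α(I_m)·Xᵀ·E_α(I_m)·X = I_{αm} (equivalently, A_0ᵀA_0 = I_m and Σ_{j=0}^{n} A_jᵀ A_{n−j} = 0 for 1 ≤ n ≤ α−1) if and only if A_0 ∈ O_m(ℂ) and there exist skew-symmetric matrices Z_1, …, Z_{α−1} ∈ ℂ^{m×m} such that A_n = A_0·W_n for 1 ≤ n ≤ α−1, where W_1 := (1/2)Z_1 and W_{n+1} := (1/2)( Z_{n+1} − Σ_{j=1}^{n} W_jᵀ W_{n+1−j} ) for n ≥ 1. Moreover, the matrices Z_1, …, Z_{α−1} are uniquely determined by X. -/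

import Mathlib

open Matrix

noncomputable section

/-- Form (0T0): block matrix partitioned by Jordan structure `(α, m)` whose `(r,s)` block,
viewed as an `α r × α s` array of `m r × m s` blocks, is a rectangular block
upper-triangular Toeplitz matrix aligned to the top-right corner. -/
def IsForm0T0 {N : ℕ} (α m : Fin N → ℕ)
    (X : Matrix (Σ r : Fin N, Fin (α r) × Fin (m r)) (Σ r : Fin N, Fin (α r) × Fin (m r)) ℂ) :
    Prop :=
  ∃ A : ∀ r s : Fin N, ℕ → Matrix (Fin (m r)) (Fin (m s)) ℂ,
    ∀ (r s : Fin N) (i : Fin (α r)) (j : Fin (α s)) (a : Fin (m r)) (b : Fin (m s)),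
      X ⟨r, (i, a)⟩ ⟨s, (j, b)⟩ =
        if (i : ℕ) + (α s - min (α r) (α s)) ≤ (j : ℕ) then
          A r s ((j : ℕ) - (i : ℕ) - (α s - min (α r) (α s))) a b
        else 0

/-- `E_b(I_m)`: the `bm × bm` block matrix with `I_m` on the block anti-diagonal. -/
def revE (b m : ℕ) : Matrix (Fin b × Fin m) (Fin b × Fin m) ℂ :=
  Matrix.of fun p q => if (p.1 : ℕ) + (q.1 : ℕ) + 1 = b ∧ p.2 = q.2 then 1 else 0

/-- `F = ⊕_r E_{α r}(I_{m r})`. -/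
def bigF {N : ℕ} (α m : Fin N → ℕ) :
    Matrix (Σ r : Fin N, Fin (α r) × Fin (m r)) (Σ r : Fin N, Fin (α r) × Fin (m r)) ℂ :=
  Matrix.blockDiagonal' fun r => revE (α r) (m r)

/-- The `n × n` upper-triangular Jordan block `J_n(λ)`. -/
def Jmat (n : ℕ) (lam : ℂ) : Matrix (Fin n) (Fin n) ℂ :=
  Matrix.of fun i j => if (j : ℕ) = (i : ℕ) then lam else if (j : ℕ) = (i : ℕ) + 1 then 1 else 0

/-- The `n × n` backward identity matrix `E_n`. -/
def ErevC (n : ℕ) : Matrix (Fin n) (Fin n) ℂ :=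
  Matrix.of fun i j => if (i : ℕ) + (j : ℕ) + 1 = n then 1 else 0

/-- `P_n = (1/√2)(I + i E_n)`. -/
noncomputable def Pmat (n : ℕ) : Matrix (Fin n) (Fin n) ℂ :=
  (Real.sqrt 2 : ℂ)⁻¹ • (1 + Complex.I • ErevC n)

/-- `P_n⁻¹ = (1/√2)(I − i E_n)`. -/
noncomputable def PmatInv (n : ℕ) : Matrix (Fin n) (Fin n) ℂ :=
  (Real.sqrt 2 : ℂ)⁻¹ • (1 - Complex.I • ErevC n)

/-- The symmetric canonical form `K_n(λ) = P_n J_n(λ) P_n⁻¹` of a Jordan block. -/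
noncomputable def Kmat (n : ℕ) (lam : ℂ) : Matrix (Fin n) (Fin n) ℂ :=
  Pmat n * Jmat n lam * PmatInv n

/-- `T(A_0, …)`: the `β × β` block upper-triangular Toeplitz matrix with blocks `A_j`. -/
def blkToeplitz (β p q : ℕ) (A : ℕ → Matrix (Fin p) (Fin q) ℂ) :
    Matrix (Fin β × Fin p) (Fin β × Fin q) ℂ :=
  Matrix.of fun x y =>
    if (x.1 : ℕ) ≤ (y.1 : ℕ) then A ((y.1 : ℕ) - (x.1 : ℕ)) x.2 y.2 else 0

/-- The `(i,i)`-th `m r × m r` entry-block of the `(r,r)` diagonal block of `X`; for a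
matrix of form (0T0) this is the leading Toeplitz coefficient `A^{rr}_0`. -/
def diagLead {N : ℕ} (α m : Fin N → ℕ)
    (X : Matrix (Σ r : Fin N, Fin (α r) × Fin (m r)) (Σ r : Fin N, Fin (α r) × Fin (m r)) ℂ)
    (r : Fin N) (i : Fin (α r)) : Matrix (Fin (m r)) (Fin (m r)) ℂ :=
  Matrix.of fun a b => X ⟨r, (i, a)⟩ ⟨r, (i, b)⟩

/-- The space of skew-symmetric matrices commuting with `S`. -/
def skewCommSubmodule (ι : Type*) [Fintype ι] [DecidableEq ι] (S : Matrix ι ι ℂ) :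
    Submodule ℂ (Matrix ι ι ℂ) where
  carrier := {X | Xᵀ = -X ∧ X * S = S * X}
  add_mem' := by
    rintro a b ⟨ha1, ha2⟩ ⟨hb1, hb2⟩
    refine ⟨?_, ?_⟩
    · rw [Matrix.transpose_add, ha1, hb1, neg_add]
    · rw [add_mul, mul_add, ha2, hb2]
  zero_mem' := by
    refine ⟨?_, ?_⟩
    · simp
    · simp
  smul_mem' := by
    rintro c a ⟨h1, h2⟩
    refine ⟨?_, ?_⟩
    · rw [Matrix.transpose_smul, h1, smul_neg]
    · rw [Matrix.smul_mul, Matrix.mul_smul, h2]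

/-- The isotropy group (as a set) of `S` under orthogonal similarity. -/
def sigmaSet {ι : Type*} [Fintype ι] [DecidableEq ι] (S : Matrix ι ι ℂ) : Set (Matrix ι ι ℂ) :=
  {Q | Qᵀ * Q = 1 ∧ Qᵀ * S * Q = S}

/-! Conjugation by `E_α(I_m)` turns `Xᵀ` into `T(A_0ᵀ, …, A_{α−1}ᵀ)`, and a product of block
Toeplitz matrices is the block Toeplitz matrix of the convolution of the blocks, so the condition
reads `Σ_{t ≤ n} A_tᵀ A_{n−t} = δ_{n0} I`. Once `A_0` is orthogonal, put `W_n = A_0ᵀ A_n`: the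
condition becomes `W_n + W_nᵀ + S_n = 0`, where `S_n = Σ_{j=1}^{n−1} W_jᵀ W_{n−j}` is symmetric.
The recursion says exactly that `Z_n = 2 W_n + S_n`, whose symmetric part is
`W_n + W_nᵀ + S_n`. Since `S_n` only involves `W_1, …, W_{n−1}`, the map `W ↦ Z` is triangular
with invertible diagonal, which gives both the existence and the uniqueness of the `Z_n`. -/

namespace Matrix

lemma revE_eq_toMatrix (b m : ℕ) :
    revE b m = (Equiv.prodCongr Fin.revPerm (Equiv.refl (Fin m))).toPEquiv.toMatrix := by
  ext ⟨i, a⟩ ⟨j, c⟩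
  simp only [revE, of_apply, PEquiv.toMatrix_apply, Equiv.toPEquiv_apply, Option.mem_def,
    Option.some.injEq, Equiv.prodCongr_apply, Prod.map, Fin.revPerm_apply, Equiv.refl_apply,
    Prod.ext_iff, Fin.ext_iff, Fin.val_rev]
  have := i.isLt
  congr 1
  exact propext (and_congr_left fun _ => by omega)

section Toeplitz

variable {β p q r : ℕ}

lemma revE_mul_transpose_blkToeplitz_mul_revE (A : ℕ → Matrix (Fin p) (Fin q) ℂ) :
    revE β q * (blkToeplitz β p q A)ᵀ * revE β p = blkToeplitz β q p fun n => (A n)ᵀ := by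
  rw [revE_eq_toMatrix, revE_eq_toMatrix, PEquiv.toMatrix_toPEquiv_mul,
    PEquiv.mul_toMatrix_toPEquiv]
  ext ⟨i, a⟩ ⟨j, c⟩
  have := i.isLt
  have := j.isLt
  simp only [submatrix_apply, transpose_apply, blkToeplitz, of_apply, id, Equiv.prodCongr_symm,
    Equiv.prodCongr_apply, Prod.map, Fin.revPerm_symm, Fin.revPerm_apply, Equiv.refl_symm,
    Equiv.refl_apply, Fin.val_rev]
  by_cases h : (i : ℕ) ≤ j
  · rw [if_pos (by omega), if_pos h, show β - (i + 1) - (β - (j + 1)) = (j : ℕ) - i by omega]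
  · rw [if_neg (by omega), if_neg h]

lemma blkToeplitz_mul (B : ℕ → Matrix (Fin p) (Fin q) ℂ) (A : ℕ → Matrix (Fin q) (Fin r) ℂ) :
    blkToeplitz β p q B * blkToeplitz β q r A =
      blkToeplitz β p r fun n => ∑ t ∈ Finset.range (n + 1), B t * A (n - t) := by
  ext ⟨i, a⟩ ⟨j, c⟩
  have hsummand : ∀ k : Fin β, ∑ d : Fin q, blkToeplitz β p q B (i, a) (k, d) *
      blkToeplitz β q r A (k, d) (j, c) =
        if (i : ℕ) ≤ k ∧ (k : ℕ) ≤ j then (B (k - i) * A (j - k)) a c else 0 := by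
    intro k
    simp only [blkToeplitz, of_apply, mul_apply]
    split_ifs <;> simp_all
  rw [mul_apply, Fintype.sum_prod_type, Finset.sum_congr rfl fun k _ => hsummand k,
    Fin.sum_univ_eq_sum_range (fun k => if i ≤ k ∧ k ≤ (j : ℕ) then (B (k - i) * A (j - k)) a c
      else 0), ← Finset.sum_filter]
  simp only [blkToeplitz, of_apply]
  split_ifs with hij
  · have hfilter : (Finset.range β).filter (fun k => (i : ℕ) ≤ k ∧ k ≤ j) =
        Finset.Ico (i : ℕ) (j + 1) := by
      ext k; simp only [Finset.mem_filter, Finset.mem_range, Finset.mem_Ico]; omega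
    rw [hfilter, Finset.sum_Ico_eq_sum_range, sum_apply,
      show (j : ℕ) + 1 - i = j - i + 1 by omega]
    refine Finset.sum_congr rfl fun t _ => ?_
    rw [Nat.add_sub_cancel_left, Nat.sub_add_eq]
  · refine Finset.sum_eq_zero fun k hk => absurd (Finset.mem_filter.mp hk).2 (by omega)

lemma blkToeplitz_eq_one_iff (hβ : 0 < β) (C : ℕ → Matrix (Fin p) (Fin p) ℂ) :
    blkToeplitz β p p C = 1 ↔ C 0 = 1 ∧ ∀ n, 0 < n → n < β → C n = 0 := by
  constructor
  · intro h
    have hentry (n : ℕ) (hn : n < β) (a b : Fin p) :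
        C n a b = (1 : Matrix (Fin β × Fin p) (Fin β × Fin p) ℂ) (⟨0, hβ⟩, a) (⟨n, hn⟩, b) := by
      rw [← h]; simp [blkToeplitz]
    refine ⟨ext fun a b => ?_, fun n hn hnβ => ext fun a b => ?_⟩
    · simp [hentry 0 hβ, one_apply]
    · simp [hentry n hnβ, Fin.ext_iff, hn.ne]
  · rintro ⟨h0, hC⟩
    ext ⟨i, a⟩ ⟨j, b⟩
    simp only [blkToeplitz, of_apply, one_apply, Prod.mk.injEq, Fin.ext_iff]
    rcases lt_trichotomy (i : ℕ) j with h | h | h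
    · rw [if_pos h.le, hC _ (by omega) (by omega), if_neg (by omega), zero_apply]
    · simp [h, h0, one_apply, Fin.ext_iff]
    · rw [if_neg (by omega), if_neg (by omega)]

end Toeplitz

section QuadSum

variable {ι K : Type*} [Fintype ι] [CommRing K]

def quadSum (W : ℕ → Matrix ι ι K) (n : ℕ) : Matrix ι ι K :=
  ∑ j ∈ Finset.Icc 1 (n - 1), (W j)ᵀ * W (n - j)

lemma transpose_quadSum (W : ℕ → Matrix ι ι K) (n : ℕ) : (quadSum W n)ᵀ = quadSum W n := by
  rw [quadSum, transpose_sum]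
  refine Finset.sum_nbij' (n - ·) (n - ·) (fun j hj => ?_) (fun j hj => ?_) (fun j hj => ?_)
    (fun j hj => ?_) (fun j hj => ?_) <;> simp only [Finset.mem_Icc] at hj ⊢ <;> try omega
  rw [transpose_mul, transpose_transpose, Nat.sub_sub_self (by omega)]

lemma quadSum_congr {W W' : ℕ → Matrix ι ι K} {n : ℕ}
    (h : ∀ k, 1 ≤ k → k < n → W k = W' k) : quadSum W n = quadSum W' n :=
  Finset.sum_congr rfl fun j hj => by
    simp only [Finset.mem_Icc] at hj
    rw [h j (by omega) (by omega), h (n - j) (by omega) (by omega)]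

lemma sum_range_transpose_mul_of_zero_eq_one [DecidableEq ι] {W : ℕ → Matrix ι ι K}
    (h0 : W 0 = 1) {n : ℕ} (hn : 1 ≤ n) :
    ∑ t ∈ Finset.range (n + 1), (W t)ᵀ * W (n - t) = W n + (W n)ᵀ + quadSum W n := by
  obtain ⟨k, rfl⟩ : ∃ k, n = k + 1 := ⟨n - 1, by omega⟩
  rw [Finset.sum_range_succ, Finset.sum_range_succ', quadSum, Nat.add_sub_cancel,
    ← Finset.Ico_add_one_right_eq_Icc, Finset.sum_Ico_eq_sum_range]
  simp only [Nat.sub_self, Nat.sub_zero, h0, transpose_one, one_mul, mul_one, Nat.add_sub_cancel,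
    Nat.add_comm 1]
  abel

def skewParam (W : ℕ → Matrix ι ι K) (n : ℕ) : Matrix ι ι K :=
  (2 : K) • W n + quadSum W n

lemma skewParam_congr {W W' : ℕ → Matrix ι ι K} {n : ℕ} (hn : 1 ≤ n)
    (h : ∀ k, 1 ≤ k → k ≤ n → W k = W' k) : skewParam W n = skewParam W' n := by
  rw [skewParam, skewParam, h n hn le_rfl, quadSum_congr fun k hk hkn => h k hk hkn.le]

end QuadSum

section SkewParameters

variable {ι K : Type*} [Fintype ι] [Field K]

def paramOfSkew (Z : ℕ → Matrix ι ι K) (n : ℕ) : Matrix ι ι K :=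
  (2 : K)⁻¹ • (Z n - ∑ j ∈ (Finset.Icc 1 (n - 1)).attach,
    (paramOfSkew Z j)ᵀ * paramOfSkew Z (n - j))
decreasing_by all_goals have := Finset.mem_Icc.mp j.2; omega

lemma paramOfSkew_eq (Z : ℕ → Matrix ι ι K) (n : ℕ) :
    paramOfSkew Z n = (2 : K)⁻¹ • (Z n - quadSum (paramOfSkew Z) n) := by
  rw [paramOfSkew, quadSum, Finset.sum_attach (Finset.Icc 1 (n - 1))
    fun j => (paramOfSkew Z j)ᵀ * paramOfSkew Z (n - j)]

variable [NeZero (2 : K)]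

lemma transpose_skewParam_eq_neg_iff (W : ℕ → Matrix ι ι K) (n : ℕ) :
    (skewParam W n)ᵀ = -skewParam W n ↔ W n + (W n)ᵀ + quadSum W n = 0 := by
  have hsym : (skewParam W n)ᵀ + skewParam W n = (2 : K) • (W n + (W n)ᵀ + quadSum W n) := by
    rw [skewParam, transpose_add, transpose_smul, transpose_quadSum]
    module
  rw [eq_neg_iff_add_eq_zero, hsym, smul_eq_zero, or_iff_right two_ne_zero]

lemma eq_of_skewParam_eq {W W' : ℕ → Matrix ι ι K} {c : ℕ}
    (h : ∀ n, 1 ≤ n → n ≤ c → skewParam W n = skewParam W' n) :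
    ∀ n, 1 ≤ n → n ≤ c → W n = W' n := by
  intro n
  induction n using Nat.strong_induction_on with
  | _ n ih =>
    intro hn hnc
    have hskew := h n hn hnc
    rw [skewParam, skewParam, quadSum_congr fun k hk hkn => ih k hkn hk (by omega)] at hskew
    exact smul_right_injective _ two_ne_zero (add_right_cancel hskew)

lemma skewParam_paramOfSkew (Z : ℕ → Matrix ι ι K) : skewParam (paramOfSkew Z) = Z := by
  funext n
  rw [skewParam, paramOfSkew_eq Z n, smul_smul, mul_inv_cancel₀ two_ne_zero, one_smul,
    sub_add_cancel]

lemma recursion_iff_eq_skewParam (Z W : ℕ → Matrix ι ι K) :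
    (W 1 = (2 : K)⁻¹ • Z 1 ∧ ∀ n, 1 ≤ n →
        W (n + 1) = (2 : K)⁻¹ • (Z (n + 1) - ∑ j ∈ Finset.Icc 1 n, (W j)ᵀ * W (n + 1 - j))) ↔
      ∀ n, 1 ≤ n → Z n = skewParam W n := by
  have hstep (n : ℕ) : W n = (2 : K)⁻¹ • (Z n - quadSum W n) ↔ Z n = skewParam W n := by
    rw [skewParam, eq_inv_smul_iff₀ two_ne_zero, eq_sub_iff_add_eq, eq_comm]
  rw [← forall₂_congr fun n (_ : 1 ≤ n) => hstep n]
  constructor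
  · rintro ⟨hW1, hrec⟩ n hn
    obtain ⟨k, rfl⟩ : ∃ k, n = k + 1 := ⟨n - 1, by omega⟩
    rcases Nat.eq_zero_or_pos k with rfl | hk
    · simpa [quadSum] using hW1
    · exact hrec k hk
  · intro h
    exact ⟨by simpa [quadSum] using h 1 le_rfl, fun n hn => h (n + 1) (by omega)⟩

lemma forall_add_transpose_add_quadSum_eq_zero_iff (B : ℕ → Matrix ι ι K) (c : ℕ) :
    (∀ n, 1 ≤ n → n ≤ c → B n + (B n)ᵀ + quadSum B n = 0) ↔
      ∃ Z W : ℕ → Matrix ι ι K, (∀ n, (Z n)ᵀ = -Z n) ∧ W 1 = (2 : K)⁻¹ • Z 1 ∧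
        (∀ n, 1 ≤ n →
          W (n + 1) = (2 : K)⁻¹ • (Z (n + 1) - ∑ j ∈ Finset.Icc 1 n, (W j)ᵀ * W (n + 1 - j))) ∧
        ∀ n, 1 ≤ n → n ≤ c → B n = W n := by
  constructor
  · intro hB
    -- past `c` the skew parameters are set to `0`, so the recursion continues indefinitely
    let Z n := if 1 ≤ n ∧ n ≤ c then skewParam B n else 0
    obtain ⟨hW1, hrec⟩ := (recursion_iff_eq_skewParam Z (paramOfSkew Z)).2 fun n _ => by
      rw [skewParam_paramOfSkew]
    refine ⟨Z, paramOfSkew Z, fun n => ?_, hW1, hrec, ?_⟩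
    · by_cases hn : 1 ≤ n ∧ n ≤ c
      · simp only [Z, if_pos hn]
        exact (transpose_skewParam_eq_neg_iff B n).2 (hB n hn.1 hn.2)
      · simp [Z, if_neg hn]
    · refine eq_of_skewParam_eq fun n hn hnc => ?_
      rw [skewParam_paramOfSkew]
      simp [Z, hn, hnc]
  · rintro ⟨Z, W, hskew, hW1, hrec, hBW⟩ n hn hnc
    rw [hBW n hn hnc, quadSum_congr fun k hk hkn => hBW k hk (by omega),
      ← transpose_skewParam_eq_neg_iff, ← (recursion_iff_eq_skewParam Z W).1 ⟨hW1, hrec⟩ n hn]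
    exact hskew n

end SkewParameters

section Orthogonal

variable {ι K : Type*} [Fintype ι] [DecidableEq ι] [CommRing K]

lemma eq_mul_iff_transpose_mul_eq {Q M N : Matrix ι ι K} (hQ : Qᵀ * Q = 1) :
    M = Q * N ↔ Qᵀ * M = N := by
  constructor
  · rintro rfl
    rw [← mul_assoc, hQ, one_mul]
  · rintro rfl
    rw [← mul_assoc, mul_eq_one_comm.mp hQ, one_mul]

lemma sum_range_transpose_mul_of_orthogonal {A : ℕ → Matrix ι ι K} (h0 : (A 0)ᵀ * A 0 = 1)
    {n : ℕ} (hn : 1 ≤ n) :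
    ∑ t ∈ Finset.range (n + 1), (A t)ᵀ * A (n - t) =
      (A 0)ᵀ * A n + ((A 0)ᵀ * A n)ᵀ + quadSum (fun k => (A 0)ᵀ * A k) n := by
  rw [← sum_range_transpose_mul_of_zero_eq_one (W := fun k => (A 0)ᵀ * A k) h0 hn]
  refine Finset.sum_congr rfl fun t _ => ?_
  rw [transpose_mul, transpose_transpose, mul_assoc, ← mul_assoc (A 0),
    mul_eq_one_comm.mp h0, one_mul]

end Orthogonal

end Matrix

theorem stmt11 (m α : ℕ) (hα : 1 ≤ α)
    (A : ℕ → Matrix (Fin m) (Fin m) ℂ) :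
    (revE α m * (blkToeplitz α m m A)ᵀ * revE α m * blkToeplitz α m m A = 1 ↔
      ((A 0)ᵀ * A 0 = 1 ∧
        ∃ Z W : ℕ → Matrix (Fin m) (Fin m) ℂ,
          (∀ n, (Z n)ᵀ = -Z n) ∧
          W 1 = (2 : ℂ)⁻¹ • Z 1 ∧
          (∀ n, 1 ≤ n →
            W (n + 1) = (2 : ℂ)⁻¹ •
              (Z (n + 1) - ∑ j ∈ Finset.Icc 1 n, (W j)ᵀ * W (n + 1 - j))) ∧
          (∀ n, 1 ≤ n → n ≤ α - 1 → A n = A 0 * W n))) ∧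
    -- uniqueness of Z_1, …, Z_{α−1}
    ((A 0)ᵀ * A 0 = 1 →
      ∀ Z W Z' W' : ℕ → Matrix (Fin m) (Fin m) ℂ,
        (∀ n, (Z n)ᵀ = -Z n) →
        W 1 = (2 : ℂ)⁻¹ • Z 1 →
        (∀ n, 1 ≤ n →
          W (n + 1) = (2 : ℂ)⁻¹ •
            (Z (n + 1) - ∑ j ∈ Finset.Icc 1 n, (W j)ᵀ * W (n + 1 - j))) →
        (∀ n, 1 ≤ n → n ≤ α - 1 → A n = A 0 * W n) →
        (∀ n, (Z' n)ᵀ = -Z' n) →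
        W' 1 = (2 : ℂ)⁻¹ • Z' 1 →
        (∀ n, 1 ≤ n →
          W' (n + 1) = (2 : ℂ)⁻¹ •
            (Z' (n + 1) - ∑ j ∈ Finset.Icc 1 n, (W' j)ᵀ * W' (n + 1 - j))) →
        (∀ n, 1 ≤ n → n ≤ α - 1 → A n = A 0 * W' n) →
        ∀ n, 1 ≤ n → n ≤ α - 1 → Z n = Z' n) := by
  refine ⟨?_, fun h0 Z W Z' W' _ hW1 hrec hAW _ hW1' hrec' hAW' n hn hnα => ?_⟩
  · rw [revE_mul_transpose_blkToeplitz_mul_revE, blkToeplitz_mul, blkToeplitz_eq_one_iff hα,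
      zero_add, Finset.sum_range_one, Nat.sub_self]
    refine and_congr_right fun h0 => ?_
    simp only [eq_mul_iff_transpose_mul_eq h0]
    rw [← forall_add_transpose_add_quadSum_eq_zero_iff]
    refine forall₂_congr fun n hn => ?_
    rw [sum_range_transpose_mul_of_orthogonal h0 hn]
    exact ⟨fun h hnα => h (by omega), fun h hnα => h (by omega)⟩
  · simp only [eq_mul_iff_transpose_mul_eq h0] at hAW hAW'
    rw [(recursion_iff_eq_skewParam Z W).1 ⟨hW1, hrec⟩ n hn,
      (recursion_iff_eq_skewParam Z' W').1 ⟨hW1', hrec'⟩ n hn]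
    exact skewParam_congr hn fun k hk hkn => (hAW k hk (hkn.trans hnα)).symm.trans
      (hAW' k hk (hkn.trans hnα))
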